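/- Let F be a proper subfield of a field K of characteristic 0. Let p(x) = Σ_{k=0}^n a_k x^k ∈ K[x] be nonconstant with a_n ≠ 0, and let q(x) = Σ_{j=0}^m b_j x^j ∈ K[x] with b_m ≠ 0 and b_m ∈ F. If b_j ∉ F for some j ≥ 1, then the composition p ∘ q has some coefficient not in F. -/

import Mathlib

/-!
Let `j` be the largest index with `b_j ∉ F`, so that `1 ≤ j < m`, and split `q = r + s` with
`r ∈ F[X]` and `deg s ≤ j`. By the binomial theorem the coefficient of `q ^ n` in degree
`(n - 1) m + j` is congruent to `n b_m ^ (n - 1) b_j` modulo `F`, and the lower powers of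
`q` in `p ∘ q` do not reach this degree. Comparing leading coefficients gives `a_n ∈ F`, so if
all coefficients of `p ∘ q` were in `F`, then `n b_m ^ (n - 1) b_j ∈ F`, hence `b_j ∈ F` because
`n ≠ 0` in characteristic `0`.
-/

open Polynomial

namespace Polynomial

theorem exists_le_coeff_notMem_forall_lt_coeff_mem {R S : Type*} [Semiring R] [SetLike S R]
    [ZeroMemClass S R] {T : S} {q : R[X]} {j : ℕ} (hj : q.coeff j ∉ T) :
    ∃ k, j ≤ k ∧ q.coeff k ∉ T ∧ ∀ i, k < i → q.coeff i ∈ T := by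
  classical
  have hjq : j ≤ q.natDegree := le_natDegree_of_ne_zero fun h => hj (h ▸ zero_mem T)
  let P : ℕ → Prop := fun i => q.coeff i ∉ T
  refine ⟨Nat.findGreatest P q.natDegree, Nat.le_findGreatest (P := P) hjq hj,
    Nat.findGreatest_spec (P := P) hjq hj, fun i hi => ?_⟩
  by_cases hiq : i ≤ q.natDegree
  · exact not_not.mp (Nat.findGreatest_is_greatest hi hiq)
  · rw [coeff_eq_zero_of_natDegree_lt (not_le.mp hiq)]
    exact zero_mem T

theorem exists_add_mem_lifts_natDegree_le {R S : Type*} [Semiring R] [Ring S] {f : R →+* S}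
    {q : S[X]} {j : ℕ} (h : ∀ i, j < i → q.coeff i ∈ Set.range f) :
    ∃ r s : S[X], r + s = q ∧ r ∈ lifts f ∧ s.natDegree ≤ j := by
  classical
  set s := ∑ i ∈ Finset.range (j + 1), monomial i (q.coeff i)
  refine ⟨q - s, s, sub_add_cancel q s, ?_, ?_⟩
  · rw [lifts_iff_coeff_lifts]
    intro i
    simp only [coeff_sub, s, finsetSum_coeff, coeff_monomial, Finset.sum_ite_eq',
      Finset.mem_range]
    split_ifs with hi
    · exact ⟨0, by simp⟩
    · simpa using h i (by omega)
  · exact natDegree_sum_le_of_forall_le _ _ fun i hi =>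
      (natDegree_monomial_le _).trans (Nat.lt_succ_iff.mp (Finset.mem_range.mp hi))

variable {R : Type*} [CommRing R]

theorem coeff_comp_eq_leadingCoeff_mul_coeff_pow (p q : R[X]) {d : ℕ}
    (hd : (p.natDegree - 1) * q.natDegree < d) :
    (p.comp q).coeff d = p.leadingCoeff * (q ^ p.natDegree).coeff d := by
  have hlow : (p.eraseLead.comp q).natDegree < d :=
    natDegree_comp_le.trans_lt
      ((Nat.mul_le_mul_right _ (eraseLead_natDegree_le p)).trans_lt hd)
  conv_lhs => rw [← eraseLead_add_C_mul_X_pow p]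
  rw [add_comp, coeff_add, coeff_eq_zero_of_natDegree_lt hlow, zero_add, mul_comp, C_comp,
    X_pow_comp, coeff_C_mul]

/-- In the binomial expansion of `(r + s) ^ (n + 1)`, the terms with `s ^ 2` as a factor do not
reach degree `n * m + j`, since `j < m`. -/
theorem coeff_add_pow_succ_of_natDegree_le {r s : R[X]} {m j : ℕ} (hr : r.natDegree ≤ m)
    (hs : s.natDegree ≤ j) (hjm : j < m) (n : ℕ) :
    ((r + s) ^ (n + 1)).coeff (n * m + j) =
      (r ^ (n + 1)).coeff (n * m + j) + (n + 1) * r.coeff m ^ n * s.coeff j := by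
  have hquad : ∀ k ∈ Finset.range n,
      (r ^ k * s ^ (n + 1 - k) * ((n + 1).choose k : R[X])).coeff (n * m + j) = 0 := by
    intro k hk
    obtain ⟨t, rfl⟩ := Nat.exists_eq_add_of_lt (Finset.mem_range.mp hk)
    apply coeff_eq_zero_of_natDegree_lt
    calc (r ^ k * s ^ (k + t + 1 + 1 - k) * ((k + t + 1 + 1).choose k : R[X])).natDegree
        ≤ k * m + (t + 2) * j + 0 :=
          natDegree_mul_le_of_le (natDegree_mul_le_of_le (natDegree_pow_le_of_le k hr)
            (natDegree_pow_le_of_le _ hs |>.trans_eq (by congr 1; omega))) (natDegree_natCast _).le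
      _ < (k + t + 1) * m + j := by nlinarith
  rw [add_pow, finsetSum_coeff, Finset.sum_range_succ, Finset.sum_range_succ,
    Finset.sum_eq_zero hquad, zero_add, Nat.choose_succ_self_right, Nat.choose_self,
    Nat.sub_self, pow_zero, mul_one, Nat.cast_one, mul_one, Nat.add_sub_cancel_left, pow_one,
    coeff_mul_natCast, coeff_mul_add_eq_of_natDegree_le (natDegree_pow_le_of_le n hr) hs,
    coeff_pow_of_natDegree_le hr]
  push_cast
  ring

theorem coeff_pow_succ_sub_mem {S : Subring R} {q : R[X]} {j : ℕ} (hjq : j < q.natDegree)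
    (h : ∀ i, j < i → q.coeff i ∈ S) (n : ℕ) :
    (q ^ (n + 1)).coeff (n * q.natDegree + j) - (n + 1) * q.leadingCoeff ^ n * q.coeff j ∈ S := by
  obtain ⟨r, s, hrs, hr, hs⟩ :=
    exists_add_mem_lifts_natDegree_le (f := S.subtype) (by simpa using h)
  have coeff_mem_of_lifts {f : R[X]} (hf : f ∈ lifts S.subtype) (i : ℕ) : f.coeff i ∈ S := by
    simpa using (lifts_iff_coeff_lifts f).mp hf i
  have hrq (i : ℕ) (hi : j < i) : r.coeff i = q.coeff i := by
    rw [← hrs, coeff_add, coeff_eq_zero_of_natDegree_lt (hs.trans_lt hi), add_zero]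
  have hrdeg : r.natDegree ≤ q.natDegree := natDegree_le_iff_coeff_eq_zero.mpr fun i hi => by
    rw [hrq i (hjq.trans hi), coeff_eq_zero_of_natDegree_lt hi]
  have hsj : s.coeff j = q.coeff j - r.coeff j := by
    rw [← hrs, coeff_add, add_sub_cancel_left]
  have hpow := coeff_add_pow_succ_of_natDegree_le hrdeg hs hjq n
  rw [hrs, hrq _ hjq, coeff_natDegree, hsj] at hpow
  have hlc : q.leadingCoeff ∈ S := h _ hjq
  rw [hpow]
  convert S.sub_mem (coeff_mem_of_lifts (pow_mem hr (n + 1)) (n * q.natDegree + j))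
    (S.mul_mem (S.mul_mem (S.add_mem (natCast_mem S n) S.one_mem) (S.pow_mem hlc n))
      (coeff_mem_of_lifts hr j)) using 1
  ring

end Polynomial

theorem Subfield.mul_mem_iff_of_ne_zero {K : Type*} [Field K] {F : Subfield K} {a b : K}
    (ha : a ∈ F) (ha0 : a ≠ 0) : a * b ∈ F ↔ b ∈ F :=
  ⟨fun hab => by simpa [ha0] using F.mul_mem (F.inv_mem ha) hab, F.mul_mem ha⟩

theorem stmt4_general {K : Type*} [Field K] [CharZero K] (F : Subfield K)
    (p q : K[X]) (hp : 0 < p.natDegree) (hq : q ≠ 0)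
    (hql : q.leadingCoeff ∈ F)
    (hj : ∃ j, 1 ≤ j ∧ q.coeff j ∉ F) :
    ∃ k, (p.comp q).coeff k ∉ F := by
  by_contra! hcomp
  obtain ⟨j₀, hj₀, hj₀F⟩ := hj
  obtain ⟨j, hj₀j, hjF, hhigh⟩ := exists_le_coeff_notMem_forall_lt_coeff_mem hj₀F
  have hjq : j < q.natDegree :=
    lt_of_le_of_ne (le_natDegree_of_ne_zero fun h => hjF (h ▸ F.zero_mem))
      (by rintro rfl; exact hjF hql)
  obtain ⟨N, hN⟩ : ∃ N, p.natDegree = N + 1 := ⟨_, (Nat.succ_pred_eq_of_pos hp).symm⟩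
  have hql0 : q.leadingCoeff ≠ 0 := leadingCoeff_ne_zero.mpr hq
  have hpl : p.leadingCoeff ∈ F := by
    have := hcomp (p.comp q).natDegree
    rwa [coeff_natDegree, leadingCoeff_comp (by omega), mul_comm,
      Subfield.mul_mem_iff_of_ne_zero (F.pow_mem hql _) (pow_ne_zero _ hql0)] at this
  have hqpow : (q ^ (N + 1)).coeff (N * q.natDegree + j) ∈ F := by
    have := hcomp (N * q.natDegree + j)
    rwa [coeff_comp_eq_leadingCoeff_mul_coeff_pow p q (by rw [hN, Nat.add_sub_cancel]; omega),
      hN, Subfield.mul_mem_iff_of_ne_zero hpl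
        (leadingCoeff_ne_zero.mpr (ne_zero_of_natDegree_gt hp))] at this
  have hjmul : ((N + 1) * q.leadingCoeff ^ N) * q.coeff j ∈ F := by
    simpa using F.sub_mem hqpow (coeff_pow_succ_sub_mem (S := F.toSubring) hjq hhigh N)
  rw [Subfield.mul_mem_iff_of_ne_zero
    (F.mul_mem (by simpa using natCast_mem F (N + 1)) (F.pow_mem hql N))
    (mul_ne_zero (by exact_mod_cast N.succ_ne_zero) (pow_ne_zero _ hql0))] at hjmul
  exact hjF hjmul

theorem stmt4 {K : Type*} [Field K] [CharZero K] (F : Subfield K) (hF : F ≠ ⊤)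
    (p q : K[X]) (hp : 0 < p.natDegree) (hq : q ≠ 0)
    (hql : q.leadingCoeff ∈ F)
    (hj : ∃ j, 1 ≤ j ∧ q.coeff j ∉ F) :
    ∃ k, (p.comp q).coeff k ∉ F :=
  stmt4_general F p q hp hq hql hj
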